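/- Let ε ∈ (0,1/4), r > 0, d, k, m ≥ 1, and let P be a curve of m points in ℝ^d. Let G = ((εr/√d)·ℤ)^d. For every curve Q of k points with dFr(P,Q) ≤ r, let W' be the curve whose i-th point is a closest point of G to Q[i]; then dFr(Q,W') ≤ (ε/2)·r and dFr(P,W') ≤ (1+ε)·r. Consequently, the set 𝒞 of all curves of k points of G whose discrete Fréchet distance to P is at most (1+ε)·r is a (k,r,ε)-cover of P. -/

import Mathlib

noncomputable section

abbrev Pt (d : ℕ) : Type := EuclideanSpace ℝ (Fin d)

/-- Cost contribution of a single pair of blocks: the maximum distance between a point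
of `A` and a point of `B` (0 if one of them is empty). -/
def pairCost {d : ℕ} (A B : List (Pt d)) : ℝ :=
  (A.map fun p => (B.map fun q => dist p q).foldr max 0).foldr max 0

/-- `ω` is a paired walk along `P` and `Q`: the first components partition `P` into
consecutive nonempty blocks, the second components partition `Q`, and in each pair at
least one block is a single point. -/
def IsPairedWalk {d : ℕ} (ω : List (List (Pt d) × List (Pt d))) (P Q : List (Pt d)) : Prop :=
  (ω.map Prod.fst).flatten = P ∧ (ω.map Prod.snd).flatten = Q ∧
    ∀ pr ∈ ω, pr.1 ≠ [] ∧ pr.2 ≠ [] ∧ (pr.1.length = 1 ∨ pr.2.length = 1)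

/-- The cost of a paired walk: the maximum over its pairs of the maximum distance between
matched points. -/
def walkCost {d : ℕ} (ω : List (List (Pt d) × List (Pt d))) : ℝ :=
  (ω.map fun pr => pairCost pr.1 pr.2).foldr max 0

/-- The discrete Fréchet distance: the minimum cost over all paired walks along `P` and `Q`. -/
def dFr {d : ℕ} (P Q : List (Pt d)) : ℝ :=
  sInf {c : ℝ | ∃ ω, IsPairedWalk ω P Q ∧ walkCost ω = c}

/-- `C` is a `(k,r,ε)`-cover of `P`: a set of curves of length `k`, each within discrete
Fréchet distance `(1+ε)r` of `P`, such that every curve `Q` of length `k` with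
`dFr P Q ≤ r` has some `W ∈ C` with `dFr Q W ≤ ε·r`. -/
def IsCover {d : ℕ} (k : ℕ) (r ε : ℝ) (P : List (Pt d)) (C : Set (List (Pt d))) : Prop :=
  (∀ W ∈ C, W.length = k ∧ dFr P W ≤ (1 + ε) * r) ∧
    ∀ Q : List (Pt d), Q.length = k → dFr P Q ≤ r → ∃ W ∈ C, dFr Q W ≤ ε * r

/-- The uniform grid in `ℝ^d` with edge length `ε·r/√d`: points all of whose coordinates
are integer multiples of `ε·r/√d`. -/
def grid (d : ℕ) (ε r : ℝ) : Set (Pt d) :=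
  {y : Pt d | ∀ i, ∃ z : ℤ, y i = z * (ε * r / Real.sqrt d)}

namespace GridAux

variable {d : ℕ}

lemma foldr_max_nonneg (l : List ℝ) : 0 ≤ l.foldr max 0 := by
  induction l with
  | nil => simp
  | cons a t ih => exact le_max_of_le_right ih

lemma le_foldr_max {l : List ℝ} {x : ℝ} (h : x ∈ l) : x ≤ l.foldr max 0 := by
  induction l with
  | nil => simp at h
  | cons a t ih =>
    rcases List.mem_cons.1 h with h | h
    · exact h ▸ le_max_left _ _
    · exact le_max_of_le_right (ih h)

lemma foldr_max_le {l : List ℝ} {c : ℝ} (hc : 0 ≤ c) (h : ∀ x ∈ l, x ≤ c) :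
    l.foldr max 0 ≤ c := by
  induction l with
  | nil => simpa
  | cons a t ih =>
    exact max_le (h a (List.mem_cons_self)) (ih fun x hx => h x (List.mem_cons_of_mem _ hx))

lemma dist_le_pairCost {A B : List (Pt d)} {p q : Pt d} (hp : p ∈ A) (hq : q ∈ B) :
    dist p q ≤ pairCost A B := by
  have h1 : dist p q ≤ (B.map fun q' => dist p q').foldr max 0 :=
    le_foldr_max (List.mem_map_of_mem hq)
  exact h1.trans (le_foldr_max (List.mem_map_of_mem hp))

lemma pairCost_nonneg (A B : List (Pt d)) : 0 ≤ pairCost A B := foldr_max_nonneg _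

lemma pairCost_le {A B : List (Pt d)} {c : ℝ} (hc : 0 ≤ c)
    (h : ∀ p ∈ A, ∀ q ∈ B, dist p q ≤ c) : pairCost A B ≤ c := by
  refine foldr_max_le hc ?_
  intro x hx
  obtain ⟨p, hp, rfl⟩ := List.mem_map.1 hx
  refine foldr_max_le hc ?_
  intro y hy
  obtain ⟨q, hq, rfl⟩ := List.mem_map.1 hy
  exact h p hp q hq

lemma walkCost_nonneg (ω : List (List (Pt d) × List (Pt d))) : 0 ≤ walkCost ω :=
  foldr_max_nonneg _

lemma pairCost_le_walkCost {ω : List (List (Pt d) × List (Pt d))}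
    {pr : List (Pt d) × List (Pt d)} (h : pr ∈ ω) : pairCost pr.1 pr.2 ≤ walkCost ω :=
  le_foldr_max (List.mem_map_of_mem h)

lemma walkCost_cons (pr : List (Pt d) × List (Pt d)) (ω : List (List (Pt d) × List (Pt d))) :
    walkCost (pr :: ω) = max (pairCost pr.1 pr.2) (walkCost ω) := rfl

lemma dFr_bddBelow (P Q : List (Pt d)) :
    BddBelow {c : ℝ | ∃ ω, IsPairedWalk ω P Q ∧ walkCost ω = c} :=
  ⟨0, fun c ⟨ω, _, hc⟩ => hc ▸ walkCost_nonneg ω⟩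

lemma dFr_le {ω : List (List (Pt d) × List (Pt d))} {P Q : List (Pt d)}
    (h : IsPairedWalk ω P Q) : dFr P Q ≤ walkCost ω :=
  csInf_le (dFr_bddBelow P Q) ⟨ω, h, rfl⟩

lemma exists_walk : ∀ (P Q : List (Pt d)), P ≠ [] → Q ≠ [] → ∃ ω, IsPairedWalk ω P Q
  | [], _, hP, _ => absurd rfl hP
  | _ :: _, [], _, hQ => absurd rfl hQ
  | [p], q :: Q', _, _ => ⟨[([p], q :: Q')], by simp [IsPairedWalk]⟩
  | p :: p' :: P', [q], _, _ => ⟨[(p :: p' :: P', [q])], by simp [IsPairedWalk]⟩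
  | p :: p' :: P', q :: q' :: Q', _, _ => by
    obtain ⟨ω, h1, h2, h3⟩ := exists_walk (p' :: P') (q' :: Q') (by simp) (by simp)
    refine ⟨([p], [q]) :: ω, ?_, ?_, ?_⟩
    · simp [h1]
    · simp [h2]
    · rintro pr hpr
      rcases List.mem_cons.1 hpr with h | h
      · subst h; simp
      · exact h3 pr h


lemma diag_isPairedWalk : ∀ (Q W : List (Pt d)), Q.length = W.length →
    IsPairedWalk (List.zipWith (fun q w => ([q], [w])) Q W) Q W
  | [], [], _ => by simp [IsPairedWalk]
  | [], _ :: _, h => by simp at h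
  | _ :: _, [], h => by simp at h
  | q :: Q', w :: W', h => by
    obtain ⟨h1, h2, h3⟩ := diag_isPairedWalk Q' W' (by simpa using h)
    refine ⟨by simpa using h1, by simpa using h2, ?_⟩
    rintro pr hpr
    rcases List.mem_cons.1 hpr with h | h
    · subst h; simp
    · exact h3 pr h

lemma walkCost_diag_le : ∀ (Q W : List (Pt d)) (δ : ℝ), 0 ≤ δ →
    (∀ (i : ℕ) (h1 : i < Q.length) (h2 : i < W.length),
      dist (Q.get ⟨i, h1⟩) (W.get ⟨i, h2⟩) ≤ δ) →
    walkCost (List.zipWith (fun q w => ([q], [w])) Q W) ≤ δ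
  | [], _, δ, hδ, _ => by simpa [walkCost] using hδ
  | _ :: _, [], δ, hδ, _ => by simpa [walkCost] using hδ
  | q :: Q', w :: W', δ, hδ, h => by
    rw [List.zipWith_cons_cons, walkCost_cons]
    refine max_le ?_ (walkCost_diag_le Q' W' δ hδ fun i h1 h2 =>
      h (i + 1) (by simpa using Nat.succ_lt_succ h1) (by simpa using Nat.succ_lt_succ h2))
    refine pairCost_le hδ ?_
    intro p hp q' hq'
    simp only [List.mem_singleton] at hp hq'
    subst hp; subst hq'
    exact h 0 (by simp) (by simp)

def replaceSnd : List (List (Pt d) × List (Pt d)) → List (Pt d) →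
    List (List (Pt d) × List (Pt d))
  | [], _ => []
  | pr :: rest, w => (pr.1, w.take pr.2.length) :: replaceSnd rest (w.drop pr.2.length)

lemma replaceSnd_isPairedWalk : ∀ (ω : List (List (Pt d) × List (Pt d))) (P Q W : List (Pt d)),
    IsPairedWalk ω P Q → W.length = Q.length → IsPairedWalk (replaceSnd ω W) P W
  | [], P, Q, W, ⟨h1, h2, _⟩, hlen => by
    simp only [List.map_nil, List.flatten_nil] at h1 h2
    subst h1; subst h2
    have : W = [] := List.eq_nil_of_length_eq_zero (by simpa using hlen)
    subst this
    exact ⟨rfl, rfl, by simp [replaceSnd]⟩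
  | pr :: rest, P, Q, W, ⟨h1, h2, h3⟩, hlen => by
    have hQ : Q = pr.2 ++ (rest.map Prod.snd).flatten := by
      rw [← h2]; simp
    have hpr := h3 pr (List.mem_cons_self)
    have hl1 : 1 ≤ pr.2.length := List.length_pos_iff.2 hpr.2.1
    have hlQ : pr.2.length ≤ Q.length := by rw [hQ]; simp
    have hlW : pr.2.length ≤ W.length := hlen ▸ hlQ
    have hih := replaceSnd_isPairedWalk rest ((rest.map Prod.fst).flatten)
      ((rest.map Prod.snd).flatten) (W.drop pr.2.length)
      ⟨rfl, rfl, fun x hx => h3 x (List.mem_cons_of_mem _ hx)⟩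
      (by rw [List.length_drop, hlen, hQ]; simp)
    obtain ⟨g1, g2, g3⟩ := hih
    refine ⟨?_, ?_, ?_⟩
    · rw [← h1]; simp [replaceSnd, g1]
    · show (W.take pr.2.length) ++ _ = W
      rw [show ((replaceSnd rest (W.drop pr.2.length)).map Prod.snd).flatten
            = W.drop pr.2.length from g2]
      exact List.take_append_drop _ _
    · rintro x hx
      rcases List.mem_cons.1 hx with h | h
      · subst h
        refine ⟨hpr.1, ?_, ?_⟩
        · have hlen' : (W.take pr.2.length).length = pr.2.length := by
            rw [List.length_take]; omega
          exact List.ne_nil_of_length_pos (by rw [hlen']; omega)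
        · rcases hpr.2.2 with h | h
          · exact Or.inl h
          · refine Or.inr ?_
            rw [List.length_take]; omega
      · exact g3 x h

lemma replaceSnd_cost : ∀ (ω : List (List (Pt d) × List (Pt d))) (Q W : List (Pt d)) (δ : ℝ),
    0 ≤ δ → (ω.map Prod.snd).flatten = Q → W.length = Q.length →
    (∀ (i : ℕ) (h1 : i < Q.length) (h2 : i < W.length),
      dist (Q.get ⟨i, h1⟩) (W.get ⟨i, h2⟩) ≤ δ) →
    walkCost (replaceSnd ω W) ≤ walkCost ω + δ
  | [], Q, W, δ, hδ, hQ, hlen, hcl => by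
    simp only [replaceSnd, walkCost, List.map_nil, List.foldr_nil]
    have := walkCost_nonneg ([] : List (List (Pt d) × List (Pt d)))
    simp [walkCost] at this ⊢
    linarith
  | pr :: rest, Q, W, δ, hδ, hQ, hlen, hcl => by
    set l := pr.2.length with hldef
    have hQeq : Q = pr.2 ++ (rest.map Prod.snd).flatten := by rw [← hQ]; simp
    have hlQ : l ≤ Q.length := by rw [hQeq]; simp [hldef]
    have hlW : l ≤ W.length := hlen ▸ hlQ
    have hcl' : ∀ (i : ℕ) (h1 : i < ((rest.map Prod.snd).flatten).length)
        (h2 : i < (W.drop l).length),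
        dist (((rest.map Prod.snd).flatten).get ⟨i, h1⟩) ((W.drop l).get ⟨i, h2⟩) ≤ δ := by
      intro i h1 h2
      have hQlen : Q.length = l + ((rest.map Prod.snd).flatten).length := by
        rw [hQeq]; simp [hldef]
      have hiQ : l + i < Q.length := by omega
      have hiW : l + i < W.length := by omega
      simp only [List.get_eq_getElem]
      have e2 : (W.drop l)[i]'h2 = W[l + i]'hiW := List.getElem_drop ..
      rw [e2]
      have e1 : Q[l + i]'hiQ = ((rest.map Prod.snd).flatten)[i]'h1 := by
        rw [List.getElem_of_eq hQeq, List.getElem_append_right (by omega)]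
        congr 1
        omega
      rw [← e1]
      exact hcl (l + i) hiQ hiW
    have ih := replaceSnd_cost rest ((rest.map Prod.snd).flatten) (W.drop l) δ hδ rfl
      (by rw [List.length_drop, hlen, hQeq]; simp [hldef]) hcl'
    show walkCost ((pr.1, W.take l) :: replaceSnd rest (W.drop l)) ≤ _
    rw [walkCost_cons, walkCost_cons]
    refine max_le ?_ (ih.trans (by have := le_max_right (pairCost pr.1 pr.2) (walkCost rest); linarith))
    have hhead : pairCost pr.1 (W.take l) ≤ pairCost pr.1 pr.2 + δ := by
      refine pairCost_le (add_nonneg (pairCost_nonneg _ _) hδ) ?_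
      intro p hp w hw
      obtain ⟨j, hj, rfl⟩ := List.mem_iff_getElem.1 hw
      have hjl : j < l := by
        have := hj; rw [List.length_take] at this; omega
      have hjW : j < W.length := by omega
      have hjQ : j < Q.length := by omega
      have e1 : (W.take l)[j] = W[j]'hjW := List.getElem_take ..
      have e2 : Q[j]'hjQ = pr.2[j]'hjl := by
        simp only [hQeq]
        exact List.getElem_append_left ..
      have hd1 : dist p (pr.2[j]'hjl) ≤ pairCost pr.1 pr.2 :=
        dist_le_pairCost hp (List.getElem_mem _)
      have hd2 : dist (Q.get ⟨j, hjQ⟩) (W.get ⟨j, hjW⟩) ≤ δ := hcl j hjQ hjW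
      simp only [List.get_eq_getElem] at hd2
      rw [e2] at hd2
      calc dist p (W.take l)[j] = dist p (W[j]'hjW) := by rw [e1]
        _ ≤ dist p (pr.2[j]'hjl) + dist (pr.2[j]'hjl) (W[j]'hjW) := dist_triangle _ _ _
        _ ≤ pairCost pr.1 pr.2 + δ := add_le_add hd1 hd2
    show pairCost pr.1 (W.take l) ≤ _
    exact hhead.trans (by linarith [le_max_left (pairCost pr.1 pr.2) (walkCost rest)])

lemma dFr_perturb {P Q W : List (Pt d)} (hP : P ≠ []) (hQ : Q ≠ []) (hlen : W.length = Q.length)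
    {δ : ℝ} (hδ : 0 ≤ δ)
    (hclose : ∀ (i : ℕ) (h1 : i < Q.length) (h2 : i < W.length),
      dist (Q.get ⟨i, h1⟩) (W.get ⟨i, h2⟩) ≤ δ) :
    dFr P W ≤ dFr P Q + δ := by
  obtain ⟨ω0, hω0⟩ := exists_walk P Q hP hQ
  have hne : Set.Nonempty {c : ℝ | ∃ ω, IsPairedWalk ω P Q ∧ walkCost ω = c} :=
    ⟨_, ω0, hω0, rfl⟩
  have key : dFr P W - δ ≤ sInf {c : ℝ | ∃ ω, IsPairedWalk ω P Q ∧ walkCost ω = c} := by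
    refine le_csInf hne ?_
    rintro c ⟨ω, hω, rfl⟩
    have h1 := dFr_le (replaceSnd_isPairedWalk ω P Q W hω hlen)
    have h2 := replaceSnd_cost ω Q W δ hδ hω.2.1 hlen hclose
    linarith
  simp only [dFr] at *
  linarith


def roundGrid (d : ℕ) (ε r : ℝ) (x : Pt d) : Pt d :=
  WithLp.toLp 2 (fun i => (round (x i / (ε * r / Real.sqrt d)) : ℤ) * (ε * r / Real.sqrt d))

lemma roundGrid_mem (d : ℕ) (ε r : ℝ) (x : Pt d) : roundGrid d ε r x ∈ grid d ε r :=
  fun i => ⟨round (x i / (ε * r / Real.sqrt d)), rfl⟩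

lemma round_min (t : ℝ) (z : ℤ) : |t - round t| ≤ |t - z| := by
  rcases eq_or_ne z (round t) with h | h
  · rw [h]
  · have h1 : (1 : ℝ) ≤ |(round t : ℝ) - z| := by
      have : round t - z ≠ 0 := sub_ne_zero.2 (by exact_mod_cast Ne.symm h)
      have := Int.one_le_abs (by exact_mod_cast this)
      exact_mod_cast this
    have h2 : |t - round t| ≤ 1 / 2 := abs_sub_round t
    have h3 : |(round t : ℝ) - z| ≤ |round t - t| + |t - z| := by
      calc |(round t : ℝ) - z| = |((round t : ℝ) - t) + (t - z)| := by ring_nf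
        _ ≤ |(round t : ℝ) - t| + |t - z| := abs_add_le _ _
    rw [abs_sub_comm (round t : ℝ) t] at h3
    linarith

variable {d : ℕ} {ε r : ℝ}

lemma coord_bound (hs : 0 < ε * r / Real.sqrt d) (x : Pt d) (i : Fin d) :
    |x i - roundGrid d ε r x i| ≤ (ε * r / Real.sqrt d) / 2 ∧
    ∀ z : ℤ, |x i - roundGrid d ε r x i| ≤ |x i - z * (ε * r / Real.sqrt d)| := by
  set s := ε * r / Real.sqrt d with hsdef
  set t := x i / s with htdef
  have hx : x i = t * s := by rw [htdef, div_mul_cancel₀ _ hs.ne']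
  have key : ∀ z : ℤ, x i - (z : ℝ) * s = (t - z) * s := by
    intro z; rw [hx]; ring
  have habs : ∀ z : ℤ, |x i - (z : ℝ) * s| = |t - z| * s := by
    intro z; rw [key, abs_mul, abs_of_pos hs]
  have hrg : roundGrid d ε r x i = (round t : ℝ) * s := rfl
  constructor
  · rw [hrg, habs]
    have := abs_sub_round t
    nlinarith
  · intro z
    rw [hrg, habs, habs]
    exact mul_le_mul_of_nonneg_right (round_min t z) hs.le

lemma dist_roundGrid_le (hd : 1 ≤ d) (hε0 : 0 < ε) (hr : 0 < r) (x : Pt d) :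
    dist x (roundGrid d ε r x) ≤ (ε / 2) * r := by
  have hsd : (0:ℝ) < Real.sqrt d := Real.sqrt_pos.2 (by exact_mod_cast hd)
  have hs : 0 < ε * r / Real.sqrt d := div_pos (mul_pos hε0 hr) hsd
  set s := ε * r / Real.sqrt d with hsdef
  rw [EuclideanSpace.dist_eq]
  have hsum : ∑ i : Fin d, dist (x i) (roundGrid d ε r x i) ^ 2 ≤ ∑ _i : Fin d, (s / 2) ^ 2 := by
    refine Finset.sum_le_sum fun i _ => ?_
    have h1 := (coord_bound hs x i).1
    rw [Real.dist_eq]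
    have h0 : (0:ℝ) ≤ |x i - roundGrid d ε r x i| := abs_nonneg _
    nlinarith
  have hsum2 : ∑ _i : Fin d, (s / 2) ^ 2 = (d : ℝ) * (s / 2) ^ 2 := by
    simp [Finset.sum_const, Finset.card_univ]
  have hd2 : (d : ℝ) * (s / 2) ^ 2 = ((ε / 2) * r) ^ 2 := by
    have hsq : Real.sqrt d ^ 2 = (d : ℝ) := Real.sq_sqrt (by positivity)
    field_simp [hsdef]
    have hd0 : (d:ℝ) ≠ 0 := by exact_mod_cast (by omega : d ≠ 0)
    have : s ^ 2 * d = (ε*r)^2 := by rw [hsdef, div_pow, hsq]; exact div_mul_cancel₀ _ hd0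
    nlinarith [this]
  calc Real.sqrt (∑ i : Fin d, dist (x i) (roundGrid d ε r x i) ^ 2)
      ≤ Real.sqrt (((ε / 2) * r) ^ 2) := by
        apply Real.sqrt_le_sqrt
        rw [← hd2, ← hsum2]; exact hsum
    _ = (ε / 2) * r := Real.sqrt_sq (by positivity)

lemma dist_le_of_closest (hs : 0 < ε * r / Real.sqrt d) (x y : Pt d)
    (hy : y ∈ grid d ε r) : dist x (roundGrid d ε r x) ≤ dist x y := by
  rw [EuclideanSpace.dist_eq, EuclideanSpace.dist_eq]
  apply Real.sqrt_le_sqrt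
  refine Finset.sum_le_sum fun i _ => ?_
  obtain ⟨z, hz⟩ := hy i
  rw [Real.dist_eq, Real.dist_eq, hz]
  have h1 := (coord_bound hs x i).2 z
  have h0 : (0:ℝ) ≤ |x i - roundGrid d ε r x i| := abs_nonneg _
  have h2 : (0:ℝ) ≤ |x i - z * (ε * r / Real.sqrt d)| := abs_nonneg _
  calc |x i - roundGrid d ε r x i| ^ 2 ≤ |x i - z * (ε * r / Real.sqrt d)| ^ 2 := by nlinarith
    _ = |x i - (z : ℝ) * (ε * r / Real.sqrt d)| ^ 2 := by norm_num
  

end GridAux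

/-- Snapping a query to the grid: for every curve `Q` of `k` points with `dFr P Q ≤ r`,
if `W'` is a curve of `k` points whose `i`-th point is a closest grid point to `Q[i]`,
then `dFr Q W' ≤ (ε/2)·r` and `dFr P W' ≤ (1+ε)·r`. Consequently, the set of all
grid curves of `k` points at discrete Fréchet distance at most `(1+ε)·r` from `P` is a
`(k,r,ε)`-cover of `P`. -/
theorem grid_cover {d m k : ℕ} (hd : 1 ≤ d) (hm : 1 ≤ m) (hk : 1 ≤ k)
    (ε r : ℝ) (hε0 : 0 < ε) (hε : ε < 1/4) (hr : 0 < r)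
    (P : List (Pt d)) (hPlen : P.length = m) :
    (∀ Q W' : List (Pt d), Q.length = k → dFr P Q ≤ r → W'.length = k →
      (∀ (i : ℕ) (hiW : i < W'.length) (hiQ : i < Q.length),
        W'.get ⟨i, hiW⟩ ∈ grid d ε r ∧
          ∀ g ∈ grid d ε r, dist (Q.get ⟨i, hiQ⟩) (W'.get ⟨i, hiW⟩) ≤ dist (Q.get ⟨i, hiQ⟩) g) →
      dFr Q W' ≤ (ε/2) * r ∧ dFr P W' ≤ (1+ε) * r) ∧
    IsCover k r ε P
      {W : List (Pt d) | W.length = k ∧ (∀ p ∈ W, p ∈ grid d ε r) ∧ dFr P W ≤ (1+ε) * r} := by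
  have hP : P ≠ [] := by
    intro h; rw [h] at hPlen; simp at hPlen; omega
  have hε2r : (0:ℝ) ≤ (ε/2) * r := by positivity
  have main : ∀ Q W' : List (Pt d), Q.length = k → dFr P Q ≤ r → W'.length = k →
      (∀ (i : ℕ) (hiW : i < W'.length) (hiQ : i < Q.length),
        W'.get ⟨i, hiW⟩ ∈ grid d ε r ∧
          ∀ g ∈ grid d ε r, dist (Q.get ⟨i, hiQ⟩) (W'.get ⟨i, hiW⟩) ≤ dist (Q.get ⟨i, hiQ⟩) g) →
      dFr Q W' ≤ (ε/2) * r ∧ dFr P W' ≤ (1+ε) * r := by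
    intro Q W' hQlen hdPQ hWlen hclosest
    have hQne : Q ≠ [] := by intro h; rw [h] at hQlen; simp at hQlen; omega
    have hlen : Q.length = W'.length := by rw [hQlen, hWlen]
    have hwq : ∀ (i : ℕ) (h1 : i < Q.length) (h2 : i < W'.length),
        dist (Q.get ⟨i, h1⟩) (W'.get ⟨i, h2⟩) ≤ (ε/2) * r := by
      intro i h1 h2
      obtain ⟨_, hcl⟩ := hclosest i h2 h1
      exact (hcl _ (GridAux.roundGrid_mem d ε r _)).trans
        (GridAux.dist_roundGrid_le hd hε0 hr _)
    constructor
    · have h1 := GridAux.dFr_le (GridAux.diag_isPairedWalk Q W' hlen)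
      have h2 := GridAux.walkCost_diag_le Q W' _ hε2r hwq
      linarith
    · have h3 := GridAux.dFr_perturb hP hQne hlen.symm hε2r hwq
      nlinarith [mul_pos hε0 hr]
  refine ⟨main, ?_, ?_⟩
  · rintro W ⟨hW1, _, hW3⟩
    exact ⟨hW1, hW3⟩
  · intro Q hQlen hdPQ
    have hsd : (0:ℝ) < Real.sqrt d := Real.sqrt_pos.2 (by exact_mod_cast hd)
    have hs : 0 < ε * r / Real.sqrt d := div_pos (mul_pos hε0 hr) hsd
    set W' := Q.map (GridAux.roundGrid d ε r) with hW'
    have hWlen : W'.length = k := by simp [hW', hQlen]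
    have hclosest : ∀ (i : ℕ) (hiW : i < W'.length) (hiQ : i < Q.length),
        W'.get ⟨i, hiW⟩ ∈ grid d ε r ∧
          ∀ g ∈ grid d ε r, dist (Q.get ⟨i, hiQ⟩) (W'.get ⟨i, hiW⟩) ≤ dist (Q.get ⟨i, hiQ⟩) g := by
      intro i hiW hiQ
      have hg : W'.get ⟨i, hiW⟩ = GridAux.roundGrid d ε r (Q.get ⟨i, hiQ⟩) := by
        simp [hW']
      rw [hg]
      exact ⟨GridAux.roundGrid_mem d ε r _,
        fun g hgg => GridAux.dist_le_of_closest hs _ g hgg⟩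
    obtain ⟨hQW, hPW⟩ := main Q W' hQlen hdPQ hWlen hclosest
    refine ⟨W', ⟨hWlen, ?_, hPW⟩, ?_⟩
    · intro p hp
      obtain ⟨q, _, rfl⟩ := List.mem_map.1 hp
      exact GridAux.roundGrid_mem d ε r q
    · nlinarith [mul_pos hε0 hr]
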